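/- Under the same hypotheses (i.i.d. ω_n with density (δ/2)|x|^{-(1+δ)} for |x|>1, 0 < αδ < d, Γ_L = (2L+1)^{(d−αδ)/δ}, b as before), let Ẽ_L^min(ω) = min_{n ∈ Λ_L} ω_n/(1+|n|)^α. Then lim_{L→∞} P(Ẽ_L^min/Γ_L ≤ x) = 1 for x ≥ 0, and = 1 − exp(−b/(2|x|^δ)) for x < 0. -/

import Mathlib

open MeasureTheory ProbabilityTheory Filter

/-- The cube Λ_L = {n ∈ ℤ^d : |n_i| ≤ L for all i}. -/
noncomputable def cube (d L : ℕ) : Finset (Fin d → ℤ) :=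
  Finset.Icc (fun _ => -(L : ℤ)) (fun _ => (L : ℤ))

/-!
The scaled minimum is at most `x` exactly when some `ω_n ≤ x Γ_L (1 + |n|)^α`, so by independence
`P(Ẽ_L^min / Γ_L ≤ x) = 1 - ∏_n (1 - F(x Γ_L (1 + |n|)^α))`, where `F` is the distribution function
of the `ω_n`. For `x ≥ 0` every factor is at most `1 - F(-1) = 1/2`, and the number of factors
grows. For `x < 0` all arguments eventually lie in the tail `F(-t) = t^{-δ}/2`, so the factors are
`1 - a_n` with `a_n = |x|^{-δ} Γ_L^{-δ} (1 + |n|)^{-αδ} / 2` uniformly small and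
`∑ a_n → b / (2|x|^δ)`, whence `∏ (1 - a_n) → exp(-b / (2|x|^δ))`.
-/

open Set Topology
open scoped ENNReal

noncomputable def symmParetoDensity (δ : ℝ) (t : ℝ) : ℝ≥0∞ :=
  ENNReal.ofReal (if 1 < |t| then δ / 2 * |t| ^ (-(1 + δ)) else 0)

noncomputable def symmPareto (δ : ℝ) : Measure ℝ :=
  volume.withDensity (symmParetoDensity δ)

theorem symmPareto_Iic_eq_Ici_neg (δ c : ℝ) :
    symmPareto δ (Iic c) = symmPareto δ (Ici (-c)) := by
  have hpre : Iic c = Neg.neg ⁻¹' Ici (-c) := by ext t; simp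
  rw [symmPareto, withDensity_apply _ measurableSet_Iic, withDensity_apply _ measurableSet_Ici,
    ← (Measure.measurePreserving_neg volume).setLIntegral_comp_preimage_emb
      (Homeomorph.neg ℝ).measurableEmbedding, hpre]
  simp [symmParetoDensity]

theorem symmPareto_Ici {δ a : ℝ} (hδ : 0 < δ) (ha : 1 ≤ a) :
    symmPareto δ (Ici a) = ENNReal.ofReal (a ^ (-δ) / 2) := by
  have ha0 : 0 < a := by linarith
  have htail :
      EqOn (symmParetoDensity δ) (fun t => ENNReal.ofReal (δ / 2 * t ^ (-(1 + δ)))) (Ioi a) := by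
    intro t (ht : a < t)
    rw [symmParetoDensity, abs_of_pos (ha0.trans ht), if_pos (by linarith)]
  rw [symmPareto, withDensity_apply _ measurableSet_Ici, setLIntegral_congr Ioi_ae_eq_Ici.symm,
    setLIntegral_congr_fun measurableSet_Ioi htail,
    ← ofReal_integral_eq_lintegral_ofReal
      ((integrableOn_Ioi_rpow_of_lt (by linarith) ha0).const_mul _)
      ((ae_restrict_iff' measurableSet_Ioi).2 (.of_forall fun t (ht : a < t) => by
        have := ha0.trans ht; positivity)),
    integral_const_mul, integral_Ioi_rpow_of_lt (by linarith) ha0]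
  congr 1
  rw [show -(1 + δ) + 1 = -δ by ring]
  field_simp

theorem symmPareto_Iic {δ c : ℝ} (hδ : 0 < δ) (hc : c ≤ -1) :
    symmPareto δ (Iic c) = ENNReal.ofReal ((-c) ^ (-δ) / 2) := by
  rw [symmPareto_Iic_eq_Ici_neg, symmPareto_Ici hδ (by linarith)]

theorem symmPareto_Ioo_neg_one_one (δ : ℝ) : symmPareto δ (Ioo (-1) 1) = 0 := by
  rw [symmPareto, withDensity_apply _ measurableSet_Ioo]
  refine (setLIntegral_congr_fun measurableSet_Ioo fun t ht => ?_).trans lintegral_zero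
  rw [symmParetoDensity, if_neg (abs_lt.2 ht).not_gt, ENNReal.ofReal_zero]

theorem isProbabilityMeasure_symmPareto {δ : ℝ} (hδ : 0 < δ) :
    IsProbabilityMeasure (symmPareto δ) := by
  constructor
  rw [← Iic_union_Ioi (a := (-1 : ℝ)), measure_union (Iic_disjoint_Ioi le_rfl) measurableSet_Ioi,
    ← Ioo_union_Ici_eq_Ioi (show (-1 : ℝ) < 1 by norm_num),
    measure_union ((Iio_disjoint_Ici le_rfl).mono_left Ioo_subset_Iio_self) measurableSet_Ici,
    symmPareto_Iic hδ le_rfl, symmPareto_Ioo_neg_one_one, symmPareto_Ici hδ le_rfl, zero_add,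
    ← ENNReal.ofReal_add]
  all_goals norm_num

theorem cdf_symmPareto_of_le_neg_one {δ c : ℝ} (hδ : 0 < δ) (hc : c ≤ -1) :
    cdf (symmPareto δ) c = (-c) ^ (-δ) / 2 := by
  have := isProbabilityMeasure_symmPareto hδ
  rw [cdf_eq_real, measureReal_def, symmPareto_Iic hδ hc, ENNReal.toReal_ofReal]
  have : 0 ≤ -c := by linarith
  positivity

theorem cdf_symmPareto_neg_mul_rpow {δ y α r : ℝ} (hδ : 0 < δ) (hy : 1 ≤ y) (hα : 0 ≤ α)
    (hr : 1 ≤ r) : cdf (symmPareto δ) (-(y * r ^ α)) = y ^ (-δ) / 2 * r ^ (-(α * δ)) := by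
  have hrα : 1 ≤ r ^ α := Real.one_le_rpow hr hα
  rw [cdf_symmPareto_of_le_neg_one hδ (by nlinarith), neg_neg,
    Real.mul_rpow (by linarith) (by linarith), ← Real.rpow_mul (by linarith), mul_neg]
  ring

theorem iIndepFun.measureReal_biUnion_preimage {Ω ι : Type*} [MeasurableSpace Ω] {P : Measure Ω}
    [IsProbabilityMeasure P] {β : ι → Type*} [∀ i, MeasurableSpace (β i)] {X : ∀ i, Ω → β i}
    (hmeas : ∀ i, Measurable (X i)) (hindep : iIndepFun X P) (s : Finset ι)
    {t : ∀ i, Set (β i)} (ht : ∀ i, MeasurableSet (t i)) :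
    P.real (⋃ i ∈ s, X i ⁻¹' t i) = 1 - ∏ i ∈ s, (1 - P.real (X i ⁻¹' t i)) := by
  have hcompl : (⋃ i ∈ s, X i ⁻¹' t i) = (⋂ i ∈ s, X i ⁻¹' (t i)ᶜ)ᶜ := by
    simp only [compl_iInter, preimage_compl, compl_compl]
  rw [hcompl, probReal_compl_eq_one_sub
      (Finset.measurableSet_biInter s fun i _ => hmeas i (ht i).compl),
    measureReal_def, hindep.meas_biInter fun i _ => ⟨_, (ht i).compl, rfl⟩, ENNReal.toReal_prod]
  simp only [← measureReal_def, preimage_compl, probReal_compl_eq_one_sub (hmeas _ (ht _))]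

theorem setOf_inf'_div_div_le_eq_biUnion {ι Ω : Type*} {s : Finset ι} (hs : s.Nonempty)
    (Y : ι → Ω → ℝ) {w : ι → ℝ} (hw : ∀ i, 0 < w i) {Γ : ℝ} (hΓ : 0 < Γ) (x : ℝ) :
    {ω | (s.inf' hs fun i => Y i ω / w i) / Γ ≤ x} = ⋃ i ∈ s, Y i ⁻¹' Iic (x * Γ * w i) := by
  ext ω
  simp only [mem_ofPred_eq, mem_iUnion, mem_preimage, mem_Iic, exists_prop,
    div_le_iff₀ hΓ, Finset.inf'_le_iff, div_le_iff₀ (hw _)]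

theorem Real.exp_neg_mul_le_one_sub {a M : ℝ} (ha : 0 ≤ a) (haM : a ≤ M) (hM : M ≤ 1 / 2) :
    Real.exp (-((1 + 2 * M) * a)) ≤ 1 - a := by
  have h1a : 0 < 1 - a := by linarith
  rw [← Real.exp_log h1a, Real.exp_le_exp]
  have hinv : (1 - a)⁻¹ ≤ 1 + (1 + 2 * M) * a := by
    rw [inv_eq_one_div, div_le_iff₀ h1a]
    nlinarith [mul_nonneg ha (sub_nonneg.2 haM),
      mul_nonneg (mul_nonneg ha ha) (by linarith : 0 ≤ 1 - 2 * M)]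
  linarith [Real.one_sub_inv_le_log_of_pos h1a]

theorem tendsto_prod_one_sub_of_tendsto_sum {α ι : Type*} {l : Filter α} {s : α → Finset ι}
    {a : α → ι → ℝ} {M : α → ℝ} {S : ℝ} (ha : ∀ᶠ L in l, ∀ i ∈ s L, 0 ≤ a L i ∧ a L i ≤ M L)
    (hM : Tendsto M l (𝓝 0)) (hS : Tendsto (fun L => ∑ i ∈ s L, a L i) l (𝓝 S)) :
    Tendsto (fun L => ∏ i ∈ s L, (1 - a L i)) l (𝓝 (Real.exp (-S))) := by
  have hlower : Tendsto (fun L => Real.exp (-((1 + 2 * M L) * ∑ i ∈ s L, a L i))) l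
      (𝓝 (Real.exp (-S))) := by
    simpa using ((tendsto_const_nhds (x := (1 : ℝ)).add (hM.const_mul 2)).mul hS).neg.rexp
  have hsmall : ∀ᶠ L in l, M L < 1 / 2 := hM.eventually (gt_mem_nhds (by norm_num))
  refine tendsto_of_tendsto_of_tendsto_of_le_of_le' hlower hS.neg.rexp ?_ ?_
  · filter_upwards [ha, hsmall] with L ha hM
    rw [Finset.mul_sum, ← Finset.sum_neg_distrib, Real.exp_sum]
    exact Finset.prod_le_prod (fun _ _ => (Real.exp_pos _).le)
      fun i hi => Real.exp_neg_mul_le_one_sub (ha i hi).1 (ha i hi).2 hM.le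
  · filter_upwards [ha, hsmall] with L ha hM
    rw [← Finset.sum_neg_distrib, Real.exp_sum]
    exact Finset.prod_le_prod (fun i hi => by linarith [(ha i hi).2])
      fun i _ => Real.one_sub_le_exp_neg _

theorem tendsto_prod_zero_of_le_of_tendsto_card {α ι : Type*} {l : Filter α} {s : α → Finset ι}
    {f : α → ι → ℝ} {r : ℝ} (hr0 : 0 ≤ r) (hr1 : r < 1)
    (hf : ∀ L, ∀ i ∈ s L, 0 ≤ f L i ∧ f L i ≤ r)
    (hs : Tendsto (fun L => (s L).card) l atTop) :
    Tendsto (fun L => ∏ i ∈ s L, f L i) l (𝓝 0) :=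
  squeeze_zero (fun L => Finset.prod_nonneg fun i hi => (hf L i hi).1)
    (fun L => (Finset.prod_le_prod (fun i hi => (hf L i hi).1) fun i hi => (hf L i hi).2).trans_eq
      (Finset.prod_const r))
    ((tendsto_pow_atTop_nhds_zero_of_lt_one hr0 hr1).comp hs)

theorem card_cube (d L : ℕ) : (cube d L).card = (2 * L + 1) ^ d := by
  rw [cube, Pi.card_Icc]
  simp only [Int.card_Icc, Finset.prod_const, Finset.card_univ, Fintype.card_fin]
  congr 1
  omega

theorem tendsto_card_cube {d : ℕ} (hd : 1 ≤ d) : Tendsto (fun L => (cube d L).card) atTop atTop :=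
  tendsto_atTop_mono (fun L => by
    rw [card_cube]
    exact (show L ≤ 2 * L + 1 by omega).trans (Nat.le_self_pow (by omega) _)) tendsto_id

theorem tendsto_prod_one_sub_cdf_symmPareto_of_neg_one_le {α ι : Type*} {l : Filter α} {δ : ℝ}
    (hδ : 0 < δ) {s : α → Finset ι} {c : α → ι → ℝ} (hc : ∀ L, ∀ i ∈ s L, -1 ≤ c L i)
    (hs : Tendsto (fun L => (s L).card) l atTop) :
    Tendsto (fun L => ∏ i ∈ s L, (1 - cdf (symmPareto δ) (c L i))) l (𝓝 0) := by
  have := isProbabilityMeasure_symmPareto hδ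
  refine tendsto_prod_zero_of_le_of_tendsto_card (by norm_num) (by norm_num : (1 / 2 : ℝ) < 1)
    (fun L i hi => ?_) hs
  have hhalf := monotone_cdf (symmPareto δ) (hc L i hi)
  rw [cdf_symmPareto_of_le_neg_one hδ le_rfl, neg_neg, Real.one_rpow] at hhalf
  constructor <;> linarith [cdf_le_one (symmPareto δ) (c L i)]

theorem tendsto_prod_one_sub_cdf_symmPareto_neg_mul_rpow {α ι : Type*} {l : Filter α}
    {δ β B : ℝ} (hδ : 0 < δ) (hβ : 0 ≤ β) {s : α → Finset ι} {y : α → ℝ} {r : ι → ℝ}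
    (hr : ∀ i, 1 ≤ r i) (hy : Tendsto y l atTop)
    (hB : Tendsto (fun L => y L ^ (-δ) * ∑ i ∈ s L, r i ^ (-(β * δ))) l (𝓝 B)) :
    Tendsto (fun L => ∏ i ∈ s L, (1 - cdf (symmPareto δ) (-(y L * r i ^ β)))) l
      (𝓝 (Real.exp (-(B / 2)))) := by
  have htail : ∀ᶠ L in l, ∀ i ∈ s L,
      cdf (symmPareto δ) (-(y L * r i ^ β)) = y L ^ (-δ) / 2 * r i ^ (-(β * δ)) := by
    filter_upwards [hy.eventually_ge_atTop 1] with L hL i _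
    exact cdf_symmPareto_neg_mul_rpow hδ hL hβ (hr i)
  have hbounds : ∀ᶠ L in l, ∀ i ∈ s L, 0 ≤ cdf (symmPareto δ) (-(y L * r i ^ β)) ∧
      cdf (symmPareto δ) (-(y L * r i ^ β)) ≤ y L ^ (-δ) / 2 := by
    filter_upwards [htail, hy.eventually_ge_atTop 0] with L hL hy0 i hi
    refine ⟨cdf_nonneg _ _, (hL i hi).trans_le (mul_le_of_le_one_right (by positivity) ?_)⟩
    exact Real.rpow_le_one_of_one_le_of_nonpos (hr i) (by nlinarith)
  have hsum :
      Tendsto (fun L => ∑ i ∈ s L, cdf (symmPareto δ) (-(y L * r i ^ β))) l (𝓝 (B / 2)) := by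
    refine (hB.div_const 2).congr' ?_
    filter_upwards [htail] with L hL
    rw [Finset.sum_congr rfl hL, ← Finset.mul_sum]
    ring
  refine tendsto_prod_one_sub_of_tendsto_sum hbounds ?_ hsum
  simpa using ((tendsto_rpow_neg_atTop hδ).comp hy).div_const 2

theorem min_potential_eigenvalue_asymptotics_general {Ω : Type*} [MeasurableSpace Ω]
    (P : Measure Ω) [IsProbabilityMeasure P]
    (d : ℕ) (hd : 1 ≤ d) (α δ b : ℝ) (hα : 0 < α) (hδ : 0 < δ)
    (h2 : α * δ < d)
    (X : (Fin d → ℤ) → Ω → ℝ) (hmeas : ∀ n, Measurable (X n))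
    (hindep : iIndepFun X P)
    (hdist : ∀ n, Measure.map (X n) P =
      volume.withDensity
        (fun t => ENNReal.ofReal (if 1 < |t| then δ / 2 * |t| ^ (-(1 + δ)) else 0)))
    (hb : Tendsto
      (fun L : ℕ =>
        ((2 * (L : ℝ) + 1) ^ (((d : ℝ) - α * δ) / δ)) ^ (-δ) *
          ∑ n ∈ cube d L, (1 + ‖n‖) ^ (-(α * δ)))
      atTop (nhds b))
    (hne : ∀ L : ℕ, (cube d L).Nonempty)
    (x : ℝ) :
    Tendsto
      (fun L : ℕ =>
        (P {ω | ((cube d L).inf' (hne L) fun n => X n ω / (1 + ‖n‖) ^ α) /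
            (2 * (L : ℝ) + 1) ^ (((d : ℝ) - α * δ) / δ) ≤ x}).toReal)
      atTop
      (nhds (if 0 ≤ x then 1 else 1 - Real.exp (-(b / (2 * |x| ^ δ))))) := by
  have := isProbabilityMeasure_symmPareto hδ
  set Γ : ℕ → ℝ := fun L => (2 * (L : ℝ) + 1) ^ (((d : ℝ) - α * δ) / δ)
  have hΓpos : ∀ L, 0 < Γ L := fun L => by positivity
  have hΓ_top : Tendsto Γ atTop atTop :=
    (tendsto_rpow_atTop (div_pos (by linarith) hδ)).comp
      (tendsto_atTop_add_const_right _ _ (tendsto_natCast_atTop_atTop.const_mul_atTop two_pos))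
  have hcdf : ∀ n c, P.real (X n ⁻¹' Iic c) = cdf (symmPareto δ) c := fun n c => by
    rw [cdf_eq_real, ← map_measureReal_apply (hmeas n) measurableSet_Iic]
    exact congrArg (Measure.real · (Iic c)) (hdist n)
  have hevent : ∀ L,
      (P {ω | ((cube d L).inf' (hne L) fun n => X n ω / (1 + ‖n‖) ^ α) / Γ L ≤ x}).toReal
        = 1 - ∏ n ∈ cube d L, (1 - cdf (symmPareto δ) (x * Γ L * (1 + ‖n‖) ^ α)) := fun L => by
    rw [← measureReal_def, setOf_inf'_div_div_le_eq_biUnion (hne L) X (fun n => by positivity)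
      (by positivity),
      iIndepFun.measureReal_biUnion_preimage hmeas hindep _ fun _ => measurableSet_Iic]
    simp only [hcdf]
  refine Tendsto.congr (fun L => (hevent L).symm) ?_
  split_ifs with hx
  · have hc : ∀ L, ∀ n ∈ cube d L, -1 ≤ x * Γ L * (1 + ‖n‖) ^ α := fun L n _ => by
      have := hΓpos L
      have : 0 ≤ x * Γ L * (1 + ‖n‖) ^ α := by positivity
      linarith
    simpa using tendsto_const_nhds.sub
      (tendsto_prod_one_sub_cdf_symmPareto_of_neg_one_le hδ hc (tendsto_card_cube hd))
  · obtain ⟨y, hy, rfl⟩ : ∃ y, 0 < y ∧ x = -y := ⟨-x, by linarith, by ring⟩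
    have hlimit := tendsto_prod_one_sub_cdf_symmPareto_neg_mul_rpow hδ hα.le
      (fun n : Fin d → ℤ => le_add_of_nonneg_right (norm_nonneg n))
      (hΓ_top.const_mul_atTop hy) (s := cube d) (B := y ^ (-δ) * b) ?_
    · convert tendsto_const_nhds.sub hlimit using 5 with L
      · simp only [neg_mul]
      · rw [abs_neg, abs_of_pos hy, Real.rpow_neg hy.le]
        field_simp
    · refine (hb.const_mul _).congr fun L => ?_
      rw [Real.mul_rpow hy.le (hΓpos L).le]
      ring

/-- Weibull-type limit for the smallest eigenvalue of the diagonal potential: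
P(Ẽ_L^min/Γ_L ≤ x) → 1 for x ≥ 0, and → 1 - exp(-b/(2|x|^δ)) for x < 0. -/
theorem min_potential_eigenvalue_asymptotics {Ω : Type*} [MeasurableSpace Ω]
    (P : Measure Ω) [IsProbabilityMeasure P]
    (d : ℕ) (hd : 1 ≤ d) (α δ b : ℝ) (hα : 0 < α) (hδ : 0 < δ)
    (h1 : 0 < α * δ) (h2 : α * δ < d)
    (X : (Fin d → ℤ) → Ω → ℝ) (hmeas : ∀ n, Measurable (X n))
    (hindep : iIndepFun X P)
    (hdist : ∀ n, Measure.map (X n) P =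
      volume.withDensity
        (fun t => ENNReal.ofReal (if 1 < |t| then δ / 2 * |t| ^ (-(1 + δ)) else 0)))
    (hb : Tendsto
      (fun L : ℕ =>
        ((2 * (L : ℝ) + 1) ^ (((d : ℝ) - α * δ) / δ)) ^ (-δ) *
          ∑ n ∈ cube d L, (1 + ‖n‖) ^ (-(α * δ)))
      atTop (nhds b))
    (hne : ∀ L : ℕ, (cube d L).Nonempty)
    (x : ℝ) :
    Tendsto
      (fun L : ℕ =>
        (P {ω | ((cube d L).inf' (hne L) fun n => X n ω / (1 + ‖n‖) ^ α) /
            (2 * (L : ℝ) + 1) ^ (((d : ℝ) - α * δ) / δ) ≤ x}).toReal)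
      atTop
      (nhds (if 0 ≤ x then 1 else 1 - Real.exp (-(b / (2 * |x| ^ δ))))) :=
  min_potential_eigenvalue_asymptotics_general P d hd α δ b hα hδ h2 X hmeas hindep hdist hb hne x
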